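/- arXiv:cs/0107008 — 6 statements merged into one kernel-verified Lean document; each statement's English description precedes it below -/
import Mathlib

section
/- For every Wang tile set τ that admits a tiling of the plane, there exist a tiling α of the plane by τ and a constant C ∈ ℕ such that for every n ≥ 1, the number of distinct n × n blocks occurring in α (over all positions (i,j) ∈ ℤ²) is at most 2^(C·n). -/
/-- A Wang tile set: a finite (enumerable) set of tiles, a finite set of colors,
and the four side colors of each tile. -/
structure WangTileSet where
  Tile : Type
  Color : Type
  fintypeTile : Fintype Tile
  decEqTile : DecidableEq Tile
  encodableTile : Encodable Tile
  fintypeColor : Fintype Color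
  north : Tile → Color
  south : Tile → Color
  east : Tile → Color
  west : Tile → Color

attribute [instance] WangTileSet.fintypeTile WangTileSet.decEqTile
  WangTileSet.encodableTile WangTileSet.fintypeColor

/-- `f` is a tiling of the plane by the Wang tile set `W`. -/
def WangTileSet.IsTiling (W : WangTileSet) (f : ℤ × ℤ → W.Tile) : Prop :=
  ∀ i j : ℤ,
    W.east (f (i, j)) = W.west (f (i + 1, j)) ∧
    W.north (f (i, j)) = W.south (f (i, j + 1))

/-- The `n × n` block of `f` at position `(i, j)`. -/
def WangTileSet.block (W : WangTileSet) (f : ℤ × ℤ → W.Tile) (n : ℕ) (i j : ℤ) :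
    Fin n × Fin n → W.Tile :=
  fun p => f (i + (p.1 : ℤ), j + (p.2 : ℤ))

/-- Plain Kolmogorov complexity of a natural number: the least size of a code
evaluating to it on input `0`. -/
noncomputable def K (m : ℕ) : ℕ :=
  sInf {k | ∃ c : Nat.Partrec.Code, c.eval 0 = Part.some m ∧ Nat.size (Encodable.encode c) = k}

/-!
Fix a tiling and look at its aligned squares of side `2^m`, at positions in `2^m ℤ × 2^m ℤ`.
Every single tile is admissible, a `2^(m+1)`-square is admissible if it is internally
consistent and its four quadrants are canonical, and an admissible square is canonical if it
is the representative chosen for its boundary among all admissible squares. Replacing every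
aligned `2^k`-square of a tiling by the canonical square with the same boundary keeps it a
tiling, and since quadrants of canonical squares are canonical, all aligned squares of scale at
most `2^k` are then canonical. A limit point of these tilings (compactness of
`Tile ^ (ℤ × ℤ)`) is a tiling in which every aligned dyadic square is determined by its
boundary, so at scale `s` there are at most `|C|^(4s)` of them. An `n × n` block with `n ≤ s`
is determined by its offset modulo `s` and the four aligned `s`-squares it meets, giving at
most `s² |C|^(16s)` blocks; with `s = 2^m ≤ 2n` this is `2^(O(n))`.
-/

open Filter Function

lemma exists_frequently_eqOn {ι α : Type*} [Finite α] (g : ℕ → ι → α) :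
    ∃ F : ι → α, ∀ S : Set ι, S.Finite → ∃ᶠ k in atTop, Set.EqOn (g k) F S := by
  let U : Ultrafilter ℕ := Ultrafilter.of atTop
  have hU : ∀ p, ∃ a, ∀ᶠ k in (U : Filter ℕ), g k p = a := fun p => by
    obtain ⟨a, ha⟩ := (U.map fun k => g k p).eq_pure_of_finite
    have h : ∀ᶠ x in ((pure a : Ultrafilter α) : Filter α), x = a := Filter.eventually_pure.2 rfl
    rw [← ha] at h
    exact ⟨a, h⟩
  choose F hF using hU
  refine ⟨F, fun S hS => ?_⟩
  have hU_le : (U : Filter ℕ) ≤ atTop := Ultrafilter.of_le _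
  exact ((hS.eventually_all.2 fun p _ => hF p).frequently).filter_mono hU_le

lemma mul_self_mul_pow_le (s c : ℕ) : s * s * (c ^ (4 * s)) ^ 4 ≤ 2 ^ ((16 * c + 2) * s) := by
  have hs : s ≤ 2 ^ s := Nat.lt_two_pow_self.le
  have hc : c ≤ 2 ^ c := Nat.lt_two_pow_self.le
  calc s * s * (c ^ (4 * s)) ^ 4 ≤ 2 ^ s * 2 ^ s * ((2 ^ c) ^ (4 * s)) ^ 4 := by gcongr
    _ = 2 ^ ((16 * c + 2) * s) := by rw [← pow_mul, ← pow_mul, ← pow_add, ← pow_add]; ring_nf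

namespace WangTileSet

variable (W : WangTileSet)

abbrev Square (s : ℕ) : Type := Fin s × Fin s → W.Tile

def blocks (f : ℤ × ℤ → W.Tile) (n : ℕ) : Set (W.Square n) :=
  {x | ∃ i j : ℤ, x = W.block f n i j}

def alignedBlocks (f : ℤ × ℤ → W.Tile) (s N : ℕ) : Set (W.Square N) :=
  {x | ∃ a b : ℤ, x = W.block f N (a * s) (b * s)}

def IsValidSquare {s : ℕ} (x : W.Square s) : Prop :=
  (∀ (a b : Fin s) (h : a.1 + 1 < s), W.east (x (a, b)) = W.west (x (⟨a.1 + 1, h⟩, b))) ∧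
  (∀ (a b : Fin s) (h : b.1 + 1 < s), W.north (x (a, b)) = W.south (x (a, ⟨b.1 + 1, h⟩)))

def westCol {s : ℕ} (x : W.Square s) : Fin s → W.Color :=
  fun j => W.west (x (⟨0, j.pos⟩, j))

def eastCol {s : ℕ} (x : W.Square s) : Fin s → W.Color :=
  fun j => W.east (x (⟨s - 1, by have := j.isLt; omega⟩, j))

def southCol {s : ℕ} (x : W.Square s) : Fin s → W.Color :=
  fun i => W.south (x (i, ⟨0, i.pos⟩))

def northCol {s : ℕ} (x : W.Square s) : Fin s → W.Color :=
  fun i => W.north (x (i, ⟨s - 1, by have := i.isLt; omega⟩))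

def boundary {s : ℕ} (x : W.Square s) :
    (Fin s → W.Color) × (Fin s → W.Color) × (Fin s → W.Color) × (Fin s → W.Color) :=
  (W.westCol x, W.eastCol x, W.southCol x, W.northCol x)

variable {W}

lemma ncard_le_of_injOn_boundary {s : ℕ} {A : Set (W.Square s)}
    (hA : Set.InjOn W.boundary A) : A.ncard ≤ Fintype.card W.Color ^ (4 * s) := by
  calc A.ncard = (W.boundary '' A).ncard := hA.ncard_image.symm
    _ ≤ Nat.card ((Fin s → W.Color) × (Fin s → W.Color) × (Fin s → W.Color) ×
          (Fin s → W.Color)) := Set.ncard_le_card _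
    _ = Fintype.card W.Color ^ (4 * s) := by
      simp only [Nat.card_eq_fintype_card, Fintype.card_prod, Fintype.card_fun,
        Fintype.card_fin]
      ring

section Tilings

variable {f : ℤ × ℤ → W.Tile}

lemma IsTiling.isValidSquare_block (hf : W.IsTiling f) (s : ℕ) (i j : ℤ) :
    W.IsValidSquare (W.block f s i j) := by
  constructor
  · intro a b _
    simpa [block, add_assoc] using (hf (i + a) (j + b)).1
  · intro a b _
    simpa [block, add_assoc] using (hf (i + a) (j + b)).2

lemma isTiling_of_isValidSquare_block_two (hf : ∀ i j : ℤ, W.IsValidSquare (W.block f 2 i j)) :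
    W.IsTiling f := fun i j => by
  simpa [block] using And.intro ((hf i j).1 0 0 one_lt_two) ((hf i j).2 0 0 one_lt_two)

lemma IsTiling.eastCol_block (hf : W.IsTiling f) (s : ℕ) (i j : ℤ) :
    W.eastCol (W.block f s i j) = W.westCol (W.block f s (i + s) j) := by
  funext t
  have hs : ((s - 1 : ℕ) : ℤ) + 1 = s := by have := t.isLt; omega
  simpa [eastCol, westCol, block, add_assoc, hs] using (hf (i + (s - 1 : ℕ)) (j + t)).1

lemma IsTiling.northCol_block (hf : W.IsTiling f) (s : ℕ) (i j : ℤ) :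
    W.northCol (W.block f s i j) = W.southCol (W.block f s i (j + s)) := by
  funext t
  have hs : ((s - 1 : ℕ) : ℤ) + 1 = s := by have := t.isLt; omega
  simpa [northCol, southCol, block, add_assoc, hs] using (hf (i + t) (j + (s - 1 : ℕ))).2

end Tilings

section Resurface

variable {s : ℕ} [NeZero s]

lemma isTiling_of_alignedBlocks {g : ℤ × ℤ → W.Tile}
    (hvalid : ∀ a b : ℤ, W.IsValidSquare (W.block g s (a * s) (b * s)))
    (heast : ∀ a b : ℤ, W.eastCol (W.block g s (a * s) (b * s)) =
      W.westCol (W.block g s ((a + 1) * s) (b * s)))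
    (hnorth : ∀ a b : ℤ, W.northCol (W.block g s (a * s) (b * s)) =
      W.southCol (W.block g s (a * s) ((b + 1) * s))) :
    W.IsTiling g := by
  intro i j
  obtain ⟨⟨a, r⟩, rfl⟩ := (Int.divModEquiv s).symm.surjective i
  obtain ⟨⟨b, t⟩, rfl⟩ := (Int.divModEquiv s).symm.surjective j
  simp only [Int.divModEquiv_symm_apply]
  constructor
  · by_cases hr : r.1 + 1 < s
    · simpa [block, add_assoc] using (hvalid a b).1 r t hr
    · have hr' : r.1 = s - 1 := by omega
      obtain ⟨r, _⟩ := r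
      subst hr'
      have hs : ((s - 1 : ℕ) : ℤ) + 1 = s := by omega
      simpa [eastCol, westCol, block, add_assoc, add_one_mul, hs] using congrFun (heast a b) t
  · by_cases ht : t.1 + 1 < s
    · simpa [block, add_assoc] using (hvalid a b).2 r t ht
    · have ht' : t.1 = s - 1 := by omega
      obtain ⟨t, _⟩ := t
      subst ht'
      have hs : ((s - 1 : ℕ) : ℤ) + 1 = s := by omega
      simpa [northCol, southCol, block, add_assoc, add_one_mul, hs] using congrFun (hnorth a b) r

def resurface (s : ℕ) [NeZero s] (φ : ℤ → ℤ → W.Square s) : ℤ × ℤ → W.Tile :=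
  fun q => φ (Int.divModEquiv s q.1).1 (Int.divModEquiv s q.2).1
    ((Int.divModEquiv s q.1).2, (Int.divModEquiv s q.2).2)

lemma block_resurface (φ : ℤ → ℤ → W.Square s) (a b : ℤ) :
    W.block (W.resurface s φ) s (a * s) (b * s) = φ a b := by
  have hdiv (c : ℤ) (r : Fin s) : Int.divModEquiv s (c * s + r) = (c, r) :=
    (Int.divModEquiv s).apply_symm_apply (c, r)
  funext p
  simp only [block, resurface, hdiv]

lemma IsTiling.resurface {f : ℤ × ℤ → W.Tile} (hf : W.IsTiling f) {φ : ℤ → ℤ → W.Square s}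
    (hvalid : ∀ a b : ℤ, W.IsValidSquare (φ a b))
    (hboundary : ∀ a b : ℤ, W.boundary (φ a b) = W.boundary (W.block f s (a * s) (b * s))) :
    W.IsTiling (W.resurface s φ) := by
  refine isTiling_of_alignedBlocks (s := s) (fun a b => ?_) (fun a b => ?_) (fun a b => ?_) <;>
    simp only [block_resurface]
  · exact hvalid a b
  · have heast := congrArg (·.2.1) (hboundary a b)
    have hwest := congrArg (·.1) (hboundary (a + 1) b)
    simp only [boundary] at heast hwest
    rw [heast, hwest, hf.eastCol_block, add_one_mul]
  · have hnorth := congrArg (·.2.2.2) (hboundary a b)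
    have hsouth := congrArg (·.2.2.1) (hboundary a (b + 1))
    simp only [boundary] at hnorth hsouth
    rw [hnorth, hsouth, hf.northCol_block, add_one_mul]

end Resurface

section Quadrants

def quadrantEquiv (s : ℕ) : Fin 2 × Fin s ≃ Fin (s * 2) :=
  finProdFinEquiv.trans (finCongr (Nat.mul_comm 2 s))

lemma quadrantEquiv_val {s : ℕ} (c : Fin 2) (r : Fin s) :
    (quadrantEquiv s (c, r) : ℕ) = c * s + r := by
  simp only [quadrantEquiv, Equiv.trans_apply, finCongr_apply, Fin.val_cast,
    finProdFinEquiv_apply_val]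
  ring

variable (W) in
def quadrant {s : ℕ} (x : W.Square (s * 2)) (c d : Fin 2) : W.Square s :=
  fun p => x (quadrantEquiv s (c, p.1), quadrantEquiv s (d, p.2))

lemma quadrant_injective {s : ℕ} {x y : W.Square (s * 2)}
    (h : ∀ c d, W.quadrant x c d = W.quadrant y c d) : x = y := by
  funext ⟨u, v⟩
  obtain ⟨⟨c, r⟩, rfl⟩ := (quadrantEquiv s).surjective u
  obtain ⟨⟨d, t⟩, rfl⟩ := (quadrantEquiv s).surjective v
  exact congrFun (h c d) (r, t)

lemma quadrant_block (f : ℤ × ℤ → W.Tile) (s : ℕ) (i j : ℤ) (c d : Fin 2) :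
    W.quadrant (W.block f (s * 2) i j) c d = W.block f s (i + c * s) (j + d * s) := by
  funext p
  simp only [quadrant, block, quadrantEquiv_val]
  push_cast
  ring_nf

lemma quadrant_alignedBlock_pow_succ (f : ℤ × ℤ → W.Tile) (m : ℕ) (a b : ℤ) (c d : Fin 2) :
    W.quadrant (W.block f (2 ^ (m + 1)) (a * (2 ^ (m + 1) : ℕ)) (b * (2 ^ (m + 1) : ℕ))) c d =
      W.block f (2 ^ m) ((a * 2 + c) * (2 ^ m : ℕ)) ((b * 2 + d) * (2 ^ m : ℕ)) := by
  refine (quadrant_block f (2 ^ m) _ _ c d).trans ?_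
  congr 1 <;> push_cast <;> ring

end Quadrants

section Counting

variable (f : ℤ × ℤ → W.Tile)

lemma ncard_blocks_le {n s : ℕ} [NeZero s] (hns : n ≤ s) :
    (W.blocks f n).ncard ≤ s * s * (W.alignedBlocks f s (s * 2)).ncard := by
  let shift (r : Fin s) (p : Fin n) : Fin (s * 2) := ⟨r + p, by omega⟩
  let window (q : (Fin s × Fin s) × W.Square (s * 2)) : W.Square n :=
    fun p => q.2 (shift q.1.1 p.1, shift q.1.2 p.2)
  have hsub : W.blocks f n ⊆ window '' (Set.univ ×ˢ W.alignedBlocks f s (s * 2)) := by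
    rintro _ ⟨i, j, rfl⟩
    obtain ⟨⟨a, r⟩, rfl⟩ := (Int.divModEquiv s).symm.surjective i
    obtain ⟨⟨b, t⟩, rfl⟩ := (Int.divModEquiv s).symm.surjective j
    refine ⟨((r, t), W.block f (s * 2) (a * s) (b * s)), ⟨trivial, a, b, rfl⟩, ?_⟩
    funext p
    simp [window, shift, block, add_assoc]
  calc (W.blocks f n).ncard
      ≤ (window '' (Set.univ ×ˢ W.alignedBlocks f s (s * 2))).ncard :=
        Set.ncard_le_ncard hsub (Set.toFinite _)
    _ ≤ (Set.univ ×ˢ W.alignedBlocks f s (s * 2)).ncard := Set.ncard_image_le (Set.toFinite _)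
    _ = s * s * (W.alignedBlocks f s (s * 2)).ncard := by
      rw [Set.ncard_prod, Set.ncard_univ, Nat.card_prod, Nat.card_fin]

lemma ncard_alignedBlocks_mul_two_le (s : ℕ) :
    (W.alignedBlocks f s (s * 2)).ncard ≤ (W.alignedBlocks f s s).ncard ^ 4 := by
  have hmem {x} (hx : x ∈ W.alignedBlocks f s (s * 2)) (c d : Fin 2) :
      W.quadrant x c d ∈ W.alignedBlocks f s s := by
    obtain ⟨a, b, rfl⟩ := hx
    exact ⟨a + c, b + d, by rw [quadrant_block, add_mul, add_mul]⟩
  let quadrants (x : W.alignedBlocks f s (s * 2)) (cd : Fin 2 × Fin 2) :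
      W.alignedBlocks f s s := ⟨W.quadrant x cd.1 cd.2, hmem x.2 cd.1 cd.2⟩
  have hinj : Injective quadrants := fun x y h =>
    Subtype.ext (quadrant_injective fun c d => congrArg Subtype.val (congrFun h (c, d)))
  calc (W.alignedBlocks f s (s * 2)).ncard
      = Nat.card (W.alignedBlocks f s (s * 2)) := (Nat.card_coe_set_eq _).symm
    _ ≤ Nat.card (Fin 2 × Fin 2 → W.alignedBlocks f s s) :=
        Nat.card_le_card_of_injective quadrants hinj
    _ = (W.alignedBlocks f s s).ncard ^ 4 := by
      rw [Nat.card_fun, Nat.card_coe_set_eq, Nat.card_prod, Nat.card_fin]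

end Counting

section Canonical

variable [Nonempty W.Tile]

variable (W) in
def canonicalIn {s : ℕ} (V : Set (W.Square s)) : Set (W.Square s) :=
  {x ∈ V | invFunOn W.boundary V (W.boundary x) = x}

lemma injOn_boundary_canonicalIn {s : ℕ} (V : Set (W.Square s)) :
    Set.InjOn W.boundary (W.canonicalIn V) := fun x hx y hy h => by
  rw [← hx.2, ← hy.2, h]

lemma invFunOn_boundary_mem_canonicalIn {s : ℕ} {V : Set (W.Square s)} {x : W.Square s}
    (hx : x ∈ V) : invFunOn W.boundary V (W.boundary x) ∈ W.canonicalIn V ∧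
      W.boundary (invFunOn W.boundary V (W.boundary x)) = W.boundary x := by
  obtain ⟨hmem, hbd⟩ := invFunOn_pos ⟨x, hx, rfl⟩
  exact ⟨⟨hmem, by rw [hbd]⟩, hbd⟩

variable (W) in
def admissible : (m : ℕ) → Set (W.Square (2 ^ m))
  | 0 => Set.univ
  | m + 1 => {x | W.IsValidSquare x ∧ ∀ c d, W.quadrant x c d ∈ W.canonicalIn (admissible m)}

variable (W) in
abbrev canonical (m : ℕ) : Set (W.Square (2 ^ m)) := W.canonicalIn (W.admissible m)

lemma isValidSquare_of_mem_admissible {m : ℕ} {x : W.Square (2 ^ m)} (hx : x ∈ W.admissible m) :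
    W.IsValidSquare x := by
  cases m with
  | zero => exact ⟨fun _ _ h => absurd h (by simp), fun _ _ h => absurd h (by simp)⟩
  | succ m => exact hx.1

variable {f : ℤ × ℤ → W.Tile}

lemma alignedBlocks_subset_admissible_succ {m : ℕ} (hf : W.IsTiling f)
    (hm : W.alignedBlocks f (2 ^ m) (2 ^ m) ⊆ W.canonical m) :
    W.alignedBlocks f (2 ^ (m + 1)) (2 ^ (m + 1)) ⊆ W.admissible (m + 1) := by
  rintro _ ⟨a, b, rfl⟩
  refine ⟨hf.isValidSquare_block _ _ _, fun c d => hm ⟨a * 2 + c, b * 2 + d, ?_⟩⟩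
  exact quadrant_alignedBlock_pow_succ f m a b c d

lemma alignedBlocks_subset_canonical_of_succ {m : ℕ}
    (hm : W.alignedBlocks f (2 ^ (m + 1)) (2 ^ (m + 1)) ⊆ W.canonical (m + 1)) :
    W.alignedBlocks f (2 ^ m) (2 ^ m) ⊆ W.canonical m := by
  rintro _ ⟨a, b, rfl⟩
  obtain ⟨⟨a, c⟩, rfl⟩ := (Int.divModEquiv 2).symm.surjective a
  obtain ⟨⟨b, d⟩, rfl⟩ := (Int.divModEquiv 2).symm.surjective b
  have hquad := (hm ⟨a, b, rfl⟩).1.2 c d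
  rw [quadrant_alignedBlock_pow_succ] at hquad
  simpa only [Int.divModEquiv_symm_apply, Nat.cast_ofNat] using hquad

lemma alignedBlocks_subset_canonical_of_le {m k : ℕ} (hmk : m ≤ k)
    (hk : W.alignedBlocks f (2 ^ k) (2 ^ k) ⊆ W.canonical k) :
    W.alignedBlocks f (2 ^ m) (2 ^ m) ⊆ W.canonical m := by
  induction hmk with
  | refl => exact hk
  | step _ ih => exact ih (alignedBlocks_subset_canonical_of_succ hk)

variable (W) in
noncomputable def canonicalize (f : ℤ × ℤ → W.Tile) (k : ℕ) : ℤ × ℤ → W.Tile :=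
  W.resurface (2 ^ k) fun a b =>
    invFunOn W.boundary (W.admissible k) (W.boundary (W.block f (2 ^ k) (a * 2 ^ k) (b * 2 ^ k)))

lemma IsTiling.canonicalize {k : ℕ} (hf : W.IsTiling f)
    (hk : W.alignedBlocks f (2 ^ k) (2 ^ k) ⊆ W.admissible k) :
    W.IsTiling (W.canonicalize f k) :=
  hf.resurface
    (fun a b => isValidSquare_of_mem_admissible (invFunOn_boundary_mem_canonicalIn
      (hk ⟨a, b, rfl⟩)).1.1)
    (fun a b => (invFunOn_boundary_mem_canonicalIn (hk ⟨a, b, rfl⟩)).2)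

lemma alignedBlocks_canonicalize_subset {k : ℕ}
    (hk : W.alignedBlocks f (2 ^ k) (2 ^ k) ⊆ W.admissible k) :
    W.alignedBlocks (W.canonicalize f k) (2 ^ k) (2 ^ k) ⊆ W.canonical k := by
  rintro _ ⟨a, b, rfl⟩
  rw [WangTileSet.canonicalize, block_resurface]
  exact (invFunOn_boundary_mem_canonicalIn (hk ⟨a, b, rfl⟩)).1

variable (W) in
noncomputable def canonicalSeq (f : ℤ × ℤ → W.Tile) : ℕ → ℤ × ℤ → W.Tile
  | 0 => f
  | k + 1 => W.canonicalize (canonicalSeq f k) k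

lemma IsTiling.canonicalSeq_spec (hf : W.IsTiling f) (k : ℕ) :
    W.IsTiling (W.canonicalSeq f k) ∧
      ∀ m < k, W.alignedBlocks (W.canonicalSeq f k) (2 ^ m) (2 ^ m) ⊆ W.canonical m := by
  induction k with
  | zero => exact ⟨hf, fun m hm => absurd hm m.not_lt_zero⟩
  | succ k ih =>
    have hadm : W.alignedBlocks (W.canonicalSeq f k) (2 ^ k) (2 ^ k) ⊆ W.admissible k := by
      cases k with
      | zero => exact Set.subset_univ _
      | succ k => exact alignedBlocks_subset_admissible_succ ih.1 (ih.2 k k.lt_succ_self)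
    exact ⟨ih.1.canonicalize hadm, fun m hm => alignedBlocks_subset_canonical_of_le
      (Nat.lt_succ_iff.1 hm) (alignedBlocks_canonicalize_subset hadm)⟩

end Canonical

lemma IsTiling.exists_injOn_boundary {f₀ : ℤ × ℤ → W.Tile} (hf₀ : W.IsTiling f₀) :
    ∃ f : ℤ × ℤ → W.Tile, W.IsTiling f ∧
      ∀ m : ℕ, Set.InjOn W.boundary (W.alignedBlocks f (2 ^ m) (2 ^ m)) := by
  have : Nonempty W.Tile := ⟨f₀ 0⟩
  obtain ⟨F, hF⟩ := exists_frequently_eqOn (W.canonicalSeq f₀)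
  have hblock (N : ℕ) (i j : ℤ) (K : ℕ) :
      ∃ k ≥ K, W.block F N i j = W.block (W.canonicalSeq f₀ k) N i j := by
    obtain ⟨k, hk, hKk⟩ := ((hF _ (Set.finite_range fun p : Fin N × Fin N =>
      (i + p.1, j + p.2))).and_eventually (eventually_ge_atTop K)).exists
    exact ⟨k, hKk, funext fun p => (hk (Set.mem_range_self p)).symm⟩
  refine ⟨F, isTiling_of_isValidSquare_block_two fun i j => ?_, fun m => ?_⟩
  · obtain ⟨k, -, hk⟩ := hblock 2 i j 0
    rw [hk]
    exact (hf₀.canonicalSeq_spec k).1.isValidSquare_block 2 i j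
  · refine (injOn_boundary_canonicalIn (W.admissible m)).mono ?_
    rintro _ ⟨a, b, rfl⟩
    obtain ⟨k, hmk, hk⟩ := hblock (2 ^ m) (a * (2 ^ m : ℕ)) (b * (2 ^ m : ℕ)) (m + 1)
    rw [hk]
    exact (hf₀.canonicalSeq_spec k).2 m hmk ⟨a, b, rfl⟩

end WangTileSet

/-- Every Wang tile set admitting a tiling of the plane admits a tiling in which the number
of distinct `n × n` blocks is `2^(O(n))`. -/
theorem exists_tiling_few_blocks (W : WangTileSet)
    (hW : ∃ f : ℤ × ℤ → W.Tile, W.IsTiling f) :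
    ∃ f : ℤ × ℤ → W.Tile, W.IsTiling f ∧ ∃ C : ℕ,
      ∀ n : ℕ, 1 ≤ n →
        {x : Fin n × Fin n → W.Tile | ∃ i j : ℤ, x = W.block f n i j}.ncard ≤ 2 ^ (C * n) := by
  obtain ⟨f₀, hf₀⟩ := hW
  obtain ⟨f, hf, hinj⟩ := hf₀.exists_injOn_boundary
  refine ⟨f, hf, 32 * Fintype.card W.Color + 4, fun n hn => ?_⟩
  set m := Nat.log 2 n + 1
  have hns : n ≤ 2 ^ m := (Nat.lt_pow_succ_log_self one_lt_two n).le
  have hsn : 2 ^ m ≤ 2 * n := by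
    rw [pow_succ]
    linarith [Nat.pow_log_le_self 2 (by omega : n ≠ 0)]
  calc (W.blocks f n).ncard
      ≤ 2 ^ m * 2 ^ m * (W.alignedBlocks f (2 ^ m) (2 ^ m * 2)).ncard := W.ncard_blocks_le f hns
    _ ≤ 2 ^ m * 2 ^ m * (W.alignedBlocks f (2 ^ m) (2 ^ m)).ncard ^ 4 := by
      gcongr
      exact W.ncard_alignedBlocks_mul_two_le f (2 ^ m)
    _ ≤ 2 ^ m * 2 ^ m * (Fintype.card W.Color ^ (4 * 2 ^ m)) ^ 4 := by
      gcongr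
      exact W.ncard_le_of_injOn_boundary (hinj m)
    _ ≤ 2 ^ ((16 * Fintype.card W.Color + 2) * 2 ^ m) := mul_self_mul_pow_le _ _
    _ ≤ 2 ^ ((32 * Fintype.card W.Color + 4) * n) :=
      Nat.pow_le_pow_right two_pos (by nlinarith)
end

section
/- For every real number c < 1 there exist an infinite binary sequence ω : ℕ → Bool and a constant d ∈ ℕ such that every substring x of ω satisfies K(x) ≥ c·|x| − d. -/
/-- The substring of `ω` of length `len` starting at position `i`. -/
def substr (ω : ℕ → Bool) (i len : ℕ) : List Bool :=
  List.ofFn fun k : Fin len => ω (i + k)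

section Aux

lemma K_witness (m : ℕ) : ∃ c : Nat.Partrec.Code,
    c.eval 0 = Part.some m ∧ Nat.size (Encodable.encode c) = K m := by
  have hne : {k | ∃ c : Nat.Partrec.Code,
      c.eval 0 = Part.some m ∧ Nat.size (Encodable.encode c) = k}.Nonempty :=
    ⟨_, Nat.Partrec.Code.const m, Nat.Partrec.Code.eval_const m 0, rfl⟩
  exact Nat.sInf_mem hne

/-- Forbidden strings: those compressible below `c·|x| − d`. -/
def Forb (c : ℝ) (d : ℕ) (x : List Bool) : Prop :=
  (K (Encodable.encode x) : ℝ) < c * x.length - d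

/-- Good strings: no forbidden infix. -/
def Good (c : ℝ) (d : ℕ) (l : List Bool) : Prop :=
  ∀ x, x <:+: l → ¬ Forb c d x

lemma not_forb_nil (c : ℝ) (d : ℕ) : ¬ Forb c d [] := by
  intro h
  have h0 : (0:ℝ) ≤ (K (Encodable.encode ([] : List Bool)) : ℝ) := Nat.cast_nonneg _
  have hd : (0:ℝ) ≤ (d:ℝ) := Nat.cast_nonneg _
  simp only [Forb, List.length_nil, Nat.cast_zero, mul_zero, zero_sub] at h
  linarith

lemma Good.infix {c : ℝ} {d : ℕ} {l x : List Bool} (hg : Good c d l) (hx : x <:+: l) :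
    Good c d x := fun y hy => hg y (hy.trans hx)

lemma good_nil (c : ℝ) (d : ℕ) : Good c d [] := by
  intro x hx
  rw [List.eq_nil_of_infix_nil hx]
  exact not_forb_nil c d

/-- All binary strings of length `n`, as a finset. -/
noncomputable def SL (n : ℕ) : Finset (List Bool) :=
  (Finset.univ : Finset (Fin n → Bool)).image List.ofFn

lemma mem_SL {n : ℕ} {l : List Bool} : l ∈ SL n ↔ l.length = n := by
  constructor
  · rintro h
    obtain ⟨f, -, rfl⟩ := Finset.mem_image.1 h
    simp
  · rintro rfl
    exact Finset.mem_image.2 ⟨l.get, Finset.mem_univ _, List.ofFn_get l⟩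

open Classical in
/-- Good strings of length `n`. -/
noncomputable def G (c : ℝ) (d : ℕ) (n : ℕ) : Finset (List Bool) :=
  (SL n).filter (Good c d)

open Classical in
/-- Forbidden strings of length `k`. -/
noncomputable def F (c : ℝ) (d : ℕ) (k : ℕ) : Finset (List Bool) :=
  (SL k).filter (Forb c d)

lemma G_zero (c : ℝ) (d : ℕ) : G c d 0 = {[]} := by
  classical
  ext l
  simp only [G, Finset.mem_filter, mem_SL, Finset.mem_singleton, List.length_eq_zero_iff]
  constructor
  · rintro ⟨rfl, -⟩; rfl
  · rintro rfl; exact ⟨rfl, good_nil c d⟩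

lemma mem_G_length {c : ℝ} {d n : ℕ} {l : List Bool} (h : l ∈ G c d n) : l.length = n := by
  classical
  exact mem_SL.1 (Finset.mem_filter.1 h).1

lemma mem_G_good {c : ℝ} {d n : ℕ} {l : List Bool} (h : l ∈ G c d n) : Good c d l := by
  classical
  exact (Finset.mem_filter.1 h).2

/-- An infix of `a ++ [b]` is an infix of `a` or a suffix of `a ++ [b]`. -/
lemma infix_concat {α : Type*} {x a : List α} {b : α} (h : x <:+: a ++ [b]) :
    x <:+: a ∨ x <:+ a ++ [b] := by
  obtain ⟨s, t, hst⟩ := h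
  rcases List.eq_nil_or_concat t with rfl | ⟨t', b', rfl⟩
  · right
    exact ⟨s, by simpa using hst⟩
  · left
    have h' : (s ++ x ++ t') ++ [b'] = a ++ [b] := by
      simpa [List.append_assoc] using hst
    have := (List.append_inj' h' rfl).1
    exact ⟨s, t', this⟩

/-- The key combinatorial recurrence. -/
lemma card_rec (c : ℝ) (d n : ℕ) :
    2 * (G c d n).card ≤ (G c d (n+1)).card +
      ∑ k ∈ Finset.Icc 1 (n+1), (G c d (n+1-k)).card * (F c d k).card := by
  classical
  set E : Finset (List Bool) :=
    ((G c d n) ×ˢ (Finset.univ : Finset Bool)).image (fun p => p.1 ++ [p.2]) with hE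
  have hEcard : E.card = 2 * (G c d n).card := by
    rw [hE, Finset.card_image_of_injOn, Finset.card_product]
    · rw [Finset.card_univ, Fintype.card_bool, mul_comm]
    · rintro ⟨a, b⟩ hab ⟨a', b'⟩ hab' hpq
      have h1 : a.length = a'.length := by
        rw [mem_G_length (Finset.mem_product.1 hab).1,
          mem_G_length (Finset.mem_product.1 hab').1]
      obtain ⟨ha, hb⟩ := List.append_inj hpq h1
      have hb' : b = b' := by simpa using hb
      exact Prod.ext ha hb'
  have hsub : E \ G c d (n+1) ⊆ (Finset.Icc 1 (n+1)).biUnion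
      (fun k => ((G c d (n+1-k)) ×ˢ (F c d k)).image fun p => p.1 ++ p.2) := by
    intro l hl
    obtain ⟨hlE, hlG⟩ := Finset.mem_sdiff.1 hl
    obtain ⟨⟨a, b⟩, hab, rfl⟩ := Finset.mem_image.1 hlE
    have haG := (Finset.mem_product.1 hab).1
    have halen : a.length = n := mem_G_length haG
    have hagood : Good c d a := mem_G_good haG
    have hlen : (a ++ [b]).length = n + 1 := by simp [halen]
    have hnotgood : ¬ Good c d (a ++ [b]) := by
      intro hg
      exact hlG (Finset.mem_filter.2 ⟨mem_SL.2 hlen, hg⟩)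
    simp only [Good] at hnotgood
    push_neg at hnotgood
    obtain ⟨x, hxinf, hxforb⟩ := hnotgood
    rcases infix_concat hxinf with hxa | hxsuf
    · exact absurd hxforb (hagood x hxa)
    · obtain ⟨s, hs⟩ := hxsuf
      have hxne : x ≠ [] := by
        rintro rfl
        exact not_forb_nil c d hxforb
      have hk1 : 1 ≤ x.length := List.length_pos_iff.2 hxne
      have hslen : s.length + x.length = n + 1 := by
        have := congrArg List.length hs
        simpa [halen] using this
      have hk2 : x.length ≤ n + 1 := by omega
      -- s is a prefix of a, hence good
      have hspre : s <+: a := by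
        obtain ⟨x', bx, rfl⟩ := List.exists_cons_of_ne_nil hxne
        rcases List.eq_nil_or_concat (bx) with h | ⟨t', b', rfl⟩
        · subst h
          have h' : s ++ [x'] = a ++ [b] := by simpa using hs
          have := (List.append_inj' h' rfl).1
          exact ⟨[], by simp [this]⟩
        · have h' : (s ++ (x' :: t')) ++ [b'] = a ++ [b] := by
            simpa [List.append_assoc] using hs
          have := (List.append_inj' h' rfl).1
          exact ⟨x' :: t', this⟩
      have hsgood : Good c d s := hagood.infix hspre.isInfix
      have hsG : s ∈ G c d (n + 1 - x.length) :=
        Finset.mem_filter.2 ⟨mem_SL.2 (by omega), hsgood⟩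
      have hxF : x ∈ F c d x.length := Finset.mem_filter.2 ⟨mem_SL.2 rfl, hxforb⟩
      refine Finset.mem_biUnion.2 ⟨x.length, Finset.mem_Icc.2 ⟨hk1, hk2⟩, ?_⟩
      exact Finset.mem_image.2 ⟨(s, x), Finset.mem_product.2 ⟨hsG, hxF⟩, hs⟩
  have h1 : (E ∩ G c d (n+1)).card ≤ (G c d (n+1)).card :=
    Finset.card_le_card Finset.inter_subset_right
  have h2 : (E \ G c d (n+1)).card ≤
      ∑ k ∈ Finset.Icc 1 (n+1), (G c d (n+1-k)).card * (F c d k).card := by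
    calc (E \ G c d (n+1)).card
        ≤ ((Finset.Icc 1 (n+1)).biUnion
            (fun k => ((G c d (n+1-k)) ×ˢ (F c d k)).image fun p => p.1 ++ p.2)).card :=
          Finset.card_le_card hsub
      _ ≤ ∑ k ∈ Finset.Icc 1 (n+1),
            (((G c d (n+1-k)) ×ˢ (F c d k)).image fun p => p.1 ++ p.2).card :=
          Finset.card_biUnion_le
      _ ≤ ∑ k ∈ Finset.Icc 1 (n+1), (G c d (n+1-k)).card * (F c d k).card := by
          refine Finset.sum_le_sum fun k _ => ?_
          calc (((G c d (n+1-k)) ×ˢ (F c d k)).image fun p => p.1 ++ p.2).card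
              ≤ ((G c d (n+1-k)) ×ˢ (F c d k)).card := Finset.card_image_le
            _ = _ := Finset.card_product _ _
  calc 2 * (G c d n).card = E.card := hEcard.symm
    _ = (E ∩ G c d (n+1)).card + (E \ G c d (n+1)).card :=
        (Finset.card_inter_add_card_sdiff E _).symm
    _ ≤ _ := add_le_add h1 h2

/-- Counting bound on forbidden strings. -/
lemma F_card_le (c : ℝ) (d k : ℕ) : ((F c d k).card : ℝ) ≤ (2:ℝ) ^ (c * k - d) := by
  classical
  rcases (F c d k).eq_empty_or_nonempty with he | ⟨x0, hx0⟩
  · rw [he]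
    simpa using (Real.rpow_nonneg (by norm_num) _)
  · have hx0' := Finset.mem_filter.1 hx0
    have hx0len : x0.length = k := mem_SL.1 hx0'.1
    have hx0forb : (K (Encodable.encode x0) : ℝ) < c * k - d := by
      have := hx0'.2
      rwa [Forb, hx0len] at this
    have hpos : (0:ℝ) ≤ c * k - d :=
      le_of_lt (lt_of_le_of_lt (Nat.cast_nonneg _) hx0forb)
    set M := ⌊c * k - d⌋₊ with hM
    have key : ∀ x ∈ F c d k, K (Encodable.encode x) ≤ M := by
      intro x hx
      have hx' := Finset.mem_filter.1 hx
      have hxlen : x.length = k := mem_SL.1 hx'.1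
      have hxf : (K (Encodable.encode x) : ℝ) < c * k - d := by
        have := hx'.2; rwa [Forb, hxlen] at this
      have h1 : (K (Encodable.encode x) : ℝ) < (M:ℝ) + 1 :=
        lt_of_lt_of_le hxf (le_of_lt (Nat.lt_floor_add_one _))
      have : K (Encodable.encode x) < M + 1 := by exact_mod_cast h1
      omega
    have hcard : (F c d k).card ≤ (Finset.range (2^M)).card := by
      apply Finset.card_le_card_of_injOn
        (fun x => Encodable.encode (Classical.choose (K_witness (Encodable.encode x))))
      · intro x hx
        have hspec := Classical.choose_spec (K_witness (Encodable.encode x))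
        have : Nat.size (Encodable.encode (Classical.choose (K_witness (Encodable.encode x)))) ≤ M :=
          le_of_eq_of_le hspec.2 (key x hx)
        exact Finset.mem_range.2 (Nat.size_le.1 this)
      · intro x hx y hy hxy
        have hsx := Classical.choose_spec (K_witness (Encodable.encode x))
        have hsy := Classical.choose_spec (K_witness (Encodable.encode y))
        have hc : Classical.choose (K_witness (Encodable.encode x)) =
            Classical.choose (K_witness (Encodable.encode y)) :=
          Encodable.encode_injective hxy
        have : Part.some (Encodable.encode x) = Part.some (Encodable.encode y) := by
          rw [← hsx.1, ← hsy.1, hc]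
        have := Part.some_injective this
        exact Encodable.encode_injective this
    rw [Finset.card_range] at hcard
    calc ((F c d k).card : ℝ) ≤ ((2^M : ℕ) : ℝ) := by exact_mod_cast hcard
      _ = (2:ℝ) ^ ((M:ℕ):ℝ) := by rw [Real.rpow_natCast]; push_cast; ring
      _ ≤ (2:ℝ) ^ (c * k - d) :=
          Real.rpow_le_rpow_of_exponent_le one_le_two (Nat.floor_le hpos)

end Aux

section Analytic

/-- There is a `d` making good strings of every length exist. -/
lemma exists_d (c : ℝ) (hc : c < 1) : ∃ d : ℕ, ∀ n : ℕ, (G c d n).Nonempty := by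
  classical
  set β : ℝ := (c + 1) / 2 with hβ
  have hcβ : c < β := by rw [hβ]; linarith
  have hβ1 : β < 1 := by rw [hβ]; linarith
  set lam : ℝ := (2:ℝ) ^ β with hlam
  have hlampos : 0 < lam := Real.rpow_pos_of_pos (by norm_num) _
  have hlam2 : lam < 2 := by
    have := Real.rpow_lt_rpow_of_exponent_lt (by norm_num : (1:ℝ) < 2) hβ1
    simpa [hlam] using this
  set r : ℝ := (2:ℝ) ^ c / lam with hr
  have hrpos : 0 < r := div_pos (Real.rpow_pos_of_pos (by norm_num) _) hlampos
  have hr1 : r < 1 := by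
    rw [hr, div_lt_one hlampos, hlam]
    exact Real.rpow_lt_rpow_of_exponent_lt (by norm_num) hcβ
  have h1r : 0 < 1 - r := by linarith
  set C : ℝ := lam * (1 - r)⁻¹ with hC
  have hCpos : 0 < C := mul_pos hlampos (inv_pos.2 h1r)
  have h2lam : 0 < 2 - lam := by linarith
  -- choose d
  obtain ⟨d, hd⟩ := exists_pow_lt_of_lt_one (div_pos h2lam hCpos)
    (by norm_num : (1/2:ℝ) < 1)
  have hdle : (2:ℝ) ^ (-(d:ℝ)) * C ≤ 2 - lam := by
    have h2d : (2:ℝ) ^ (-(d:ℝ)) = (1/2:ℝ) ^ d := by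
      rw [Real.rpow_neg (by norm_num), Real.rpow_natCast, one_div, inv_pow]
    rw [h2d]
    calc (1/2:ℝ)^d * C ≤ ((2 - lam)/C) * C := by
          apply mul_le_mul_of_nonneg_right hd.le hCpos.le
      _ = 2 - lam := by field_simp
  refine ⟨d, ?_⟩
  -- main induction
  set g : ℕ → ℝ := fun n => ((G c d n).card : ℝ) with hg
  have hgnonneg : ∀ n, 0 ≤ g n := fun n => Nat.cast_nonneg _
  have hg0 : g 0 = 1 := by simp [hg, G_zero]
  have hrec : ∀ n, 2 * g n ≤ g (n+1) +
      ∑ k ∈ Finset.Icc 1 (n+1), g (n+1-k) * ((F c d k).card : ℝ) := by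
    intro n
    have := card_rec c d n
    have hcast : ((2 * (G c d n).card : ℕ) : ℝ) ≤
        (((G c d (n+1)).card + ∑ k ∈ Finset.Icc 1 (n+1),
          (G c d (n+1-k)).card * (F c d k).card : ℕ) : ℝ) := by exact_mod_cast this
    push_cast at hcast
    simpa [hg] using hcast
  have hstep : ∀ n, lam * g n ≤ g (n+1) := by
    intro n
    induction n using Nat.strong_induction_on with
    | _ n IH =>
      have chain : ∀ m : ℕ, ∀ j : ℕ, j + m ≤ n → lam ^ m * g j ≤ g (j + m) := by
        intro m
        induction m with
        | zero => intro j _; simp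
        | succ m ih =>
          intro j hj
          have h1 : lam ^ m * g j ≤ g (j + m) := ih j (by omega)
          have h2 : lam * g (j + m) ≤ g (j + m + 1) := IH (j + m) (by omega)
          calc lam ^ (m+1) * g j = lam * (lam ^ m * g j) := by ring
            _ ≤ lam * g (j + m) := by
                exact mul_le_mul_of_nonneg_left h1 hlampos.le
            _ ≤ g (j + m + 1) := h2
            _ = g (j + (m+1)) := by ring_nf
      -- bound each term of the sum
      have hterm : ∀ k ∈ Finset.Icc 1 (n+1),
          g (n+1-k) * ((F c d k).card : ℝ) ≤
            g n * ((2:ℝ) ^ (-(d:ℝ)) * lam * r ^ k) := by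
        intro k hk
        obtain ⟨hk1, hk2⟩ := Finset.mem_Icc.1 hk
        have hch : lam ^ (k-1) * g (n+1-k) ≤ g n := by
          have := chain (k-1) (n+1-k) (by omega)
          have heq : n+1-k + (k-1) = n := by omega
          rwa [heq] at this
        have hFk : ((F c d k).card : ℝ) ≤ (2:ℝ) ^ (c * k - d) := F_card_le c d k
        have hident : (2:ℝ) ^ (c * k - d) =
            ((2:ℝ) ^ (-(d:ℝ)) * lam * r ^ k) * lam ^ (k-1) := by
          have hrk : r ^ k * lam ^ k = ((2:ℝ)^c) ^ k := by
            rw [hr]; rw [div_pow]; field_simp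
          have hlamk : lam * lam ^ (k-1) = lam ^ k := by
            rw [← pow_succ']
            congr 1
            omega
          have h2ck : ((2:ℝ)^c) ^ k = (2:ℝ) ^ (c * k) := by
            rw [← Real.rpow_natCast ((2:ℝ)^c) k, ← Real.rpow_mul (by norm_num)]
          calc (2:ℝ) ^ (c * k - d) = (2:ℝ) ^ (-(d:ℝ)) * (2:ℝ) ^ (c * k) := by
                rw [← Real.rpow_add (by norm_num)]; ring_nf
            _ = (2:ℝ) ^ (-(d:ℝ)) * (r ^ k * (lam * lam ^ (k-1))) := by
                rw [hlamk, hrk, h2ck]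
            _ = ((2:ℝ) ^ (-(d:ℝ)) * lam * r ^ k) * lam ^ (k-1) := by ring
        have hfac : (0:ℝ) ≤ (2:ℝ) ^ (-(d:ℝ)) * lam * r ^ k :=
          mul_nonneg (mul_nonneg (Real.rpow_nonneg (by norm_num) _) hlampos.le)
            (pow_nonneg hrpos.le _)
        calc g (n+1-k) * ((F c d k).card : ℝ)
            ≤ g (n+1-k) * (2:ℝ) ^ (c * k - d) :=
              mul_le_mul_of_nonneg_left hFk (hgnonneg _)
          _ = ((2:ℝ) ^ (-(d:ℝ)) * lam * r ^ k) * (lam ^ (k-1) * g (n+1-k)) := by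
              rw [hident]; ring
          _ ≤ ((2:ℝ) ^ (-(d:ℝ)) * lam * r ^ k) * g n :=
              mul_le_mul_of_nonneg_left hch hfac
          _ = g n * ((2:ℝ) ^ (-(d:ℝ)) * lam * r ^ k) := by ring
      have hsum : ∑ k ∈ Finset.Icc 1 (n+1), g (n+1-k) * ((F c d k).card : ℝ) ≤
          g n * (2 - lam) := by
        calc ∑ k ∈ Finset.Icc 1 (n+1), g (n+1-k) * ((F c d k).card : ℝ)
            ≤ ∑ k ∈ Finset.Icc 1 (n+1), g n * ((2:ℝ) ^ (-(d:ℝ)) * lam * r ^ k) :=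
              Finset.sum_le_sum hterm
          _ = g n * ((2:ℝ) ^ (-(d:ℝ)) * lam) * ∑ k ∈ Finset.Icc 1 (n+1), r ^ k := by
              rw [Finset.mul_sum]; apply Finset.sum_congr rfl; intros; ring
          _ ≤ g n * ((2:ℝ) ^ (-(d:ℝ)) * lam) * (1 - r)⁻¹ := by
              apply mul_le_mul_of_nonneg_left _ (mul_nonneg (hgnonneg _)
                (mul_nonneg (Real.rpow_nonneg (by norm_num) _) hlampos.le))
              calc ∑ k ∈ Finset.Icc 1 (n+1), r ^ k
                  ≤ ∑ k ∈ Finset.range (n+2), r ^ k := by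
                    apply Finset.sum_le_sum_of_subset_of_nonneg
                    · intro k hk
                      obtain ⟨-, h2⟩ := Finset.mem_Icc.1 hk
                      exact Finset.mem_range.2 (by omega)
                    · intros; exact pow_nonneg hrpos.le _
                _ ≤ ∑' k : ℕ, r ^ k :=
                    Summable.sum_le_tsum _ (fun _ _ => pow_nonneg hrpos.le _)
                      (summable_geometric_of_lt_one hrpos.le hr1)
                _ = (1 - r)⁻¹ := tsum_geometric_of_lt_one hrpos.le hr1
          _ = g n * ((2:ℝ) ^ (-(d:ℝ)) * C) := by rw [hC]; ring
          _ ≤ g n * (2 - lam) := mul_le_mul_of_nonneg_left hdle (hgnonneg n)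
      have hr2 := hrec n
      nlinarith [hgnonneg n]
  have hpos : ∀ n, 0 < g n := by
    intro n
    induction n with
    | zero => rw [hg0]; norm_num
    | succ n ih => exact lt_of_lt_of_le (mul_pos hlampos ih) (hstep n)
  intro n
  rw [← Finset.card_pos]
  have : (0:ℝ) < ((G c d n).card : ℝ) := hpos n
  exact_mod_cast this

end Analytic

section Omega

variable {c : ℝ} {d : ℕ}

/-- `l` has arbitrarily long good extensions. -/
def ExtG (c : ℝ) (d : ℕ) (l : List Bool) : Prop :=
  ∀ n : ℕ, ∃ l', l <+: l' ∧ Good c d l' ∧ l'.length = l.length + n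

lemma ext_nil (hG : ∀ n : ℕ, (G c d n).Nonempty) : ExtG c d [] := by
  intro n
  obtain ⟨l', hl'⟩ := hG n
  exact ⟨l', List.nil_prefix, mem_G_good hl', by simpa using mem_G_length hl'⟩

lemma exists_bit {l l' : List Bool} (h : l <+: l') (hlen : l.length < l'.length) :
    ∃ b : Bool, l ++ [b] <+: l' := by
  obtain ⟨t, rfl⟩ := h
  have ht : t ≠ [] := by
    rintro rfl; simp at hlen
  obtain ⟨b, t', rfl⟩ := List.exists_cons_of_ne_nil ht
  exact ⟨b, t', by simp⟩

lemma ext_step {l : List Bool} (h : ExtG c d l) : ∃ b : Bool, ExtG c d (l ++ [b]) := by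
  by_contra hcon
  push_neg at hcon
  have h' : ∀ b : Bool, ∃ nb : ℕ, ∀ l', l ++ [b] <+: l' → Good c d l' →
      l'.length ≠ l.length + 1 + nb := by
    intro b
    have := hcon b
    rw [ExtG] at this
    push_neg at this
    obtain ⟨nb, hnb⟩ := this
    refine ⟨nb, fun l' h1 h2 h3 => ?_⟩
    exact hnb l' h1 h2 (by simpa using h3)
  obtain ⟨n0, hn0⟩ := h' false
  obtain ⟨n1, hn1⟩ := h' true
  set N := max n0 n1 with hN
  obtain ⟨L, hLpre, hLgood, hLlen⟩ := h (1 + N)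
  have hlt : l.length < L.length := by omega
  obtain ⟨b, hb⟩ := exists_bit hLpre hlt
  have hbN : ∃ nb ≤ N, ∀ l', l ++ [b] <+: l' → Good c d l' →
      l'.length ≠ l.length + 1 + nb := by
    cases b
    · exact ⟨n0, le_max_left _ _, hn0⟩
    · exact ⟨n1, le_max_right _ _, hn1⟩
  obtain ⟨nb, hnbN, hnb⟩ := hbN
  set L' := L.take (l.length + 1 + nb) with hL'
  have hpre' : l ++ [b] <+: L' := by
    rw [hL']
    exact List.prefix_take_iff.2 ⟨hb, by simp⟩
  have hgood' : Good c d L' := hLgood.infix (List.take_prefix _ _).isInfix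
  have hlen' : L'.length = l.length + 1 + nb := by
    rw [hL', List.length_take]
    omega
  exact hnb L' hpre' hgood' hlen'

/-- Construct an infinite sequence all of whose substrings avoid forbidden strings. -/
lemma exists_omega (c : ℝ) (d : ℕ) (hG : ∀ n : ℕ, (G c d n).Nonempty) :
    ∃ ω : ℕ → Bool, ∀ i len : ℕ, ¬ Forb c d (substr ω i len) := by
  classical
  let seq : ℕ → {l : List Bool // ExtG c d l} := fun n =>
    Nat.rec ⟨[], ext_nil hG⟩
      (fun _ p => ⟨p.1 ++ [Classical.choose (ext_step p.2)],
        Classical.choose_spec (ext_step p.2)⟩) n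
  have hstep : ∀ n, ∃ b : Bool, (seq (n+1)).1 = (seq n).1 ++ [b] :=
    fun n => ⟨_, rfl⟩
  have hlen : ∀ n, (seq n).1.length = n := by
    intro n
    induction n with
    | zero => rfl
    | succ n ih =>
      obtain ⟨b, hb⟩ := hstep n
      rw [hb]
      simp [ih]
  have hpre : ∀ m n, m ≤ n → (seq m).1 <+: (seq n).1 := by
    intro m n hmn
    induction n with
    | zero =>
      have : m = 0 := by omega
      subst this; exact List.prefix_rfl
    | succ n ih =>
      rcases Nat.lt_or_ge m (n+1) with h | h
      · have h1 := ih (by omega)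
        obtain ⟨b, hb⟩ := hstep n
        rw [hb]
        exact h1.trans (List.prefix_append _ _)
      · have : m = n + 1 := by omega
        subst this; exact List.prefix_rfl
  have hgood : ∀ n, Good c d (seq n).1 := by
    intro n
    obtain ⟨l', hp, hg, hl⟩ := (seq n).2 0
    have : (seq n).1 = l' := hp.eq_of_length (by omega)
    rw [this]; exact hg
  refine ⟨fun n => ((seq (n+1)).1).getD n false, ?_⟩
  intro i len
  set ω : ℕ → Bool := fun n => ((seq (n+1)).1).getD n false with hω
  have hωval : ∀ m n (h : n < m), (seq m).1.getD n false = ω n := by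
    intro m n h
    have h1 : n < (seq m).1.length := by rw [hlen]; exact h
    have h2 : n < (seq (n+1)).1.length := by rw [hlen (n+1)]; omega
    rw [hω]
    simp only
    rw [List.getD_eq_getElem _ _ h1, List.getD_eq_getElem _ _ h2]
    exact ((hpre (n+1) m h).getElem h2).symm
  have hsubstr : substr ω i len = (seq (i+len)).1.drop i := by
    apply List.ext_getElem
    · simp [substr, hlen]
    · intro k h1 h2
      have hk : k < len := by simpa [substr] using h1
      have hik : i + k < (seq (i+len)).1.length := by rw [hlen (i+len)]; omega
      simp only [substr]
      rw [List.getElem_ofFn]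
      rw [List.getElem_drop]
      have := hωval (i+len) (i+k) (by rw [← hlen (i+len)] at hik; omega)
      rw [← List.getD_eq_getElem _ false hik]
      rw [this]
  have hinf : substr ω i len <:+: (seq (i+len)).1 := by
    rw [hsubstr]
    exact (List.drop_suffix _ _).isInfix
  exact hgood (i+len) _ hinf

end Omega

/-- For every `c < 1` there is an infinite binary sequence all of whose substrings `x`
have complexity at least `c·|x| − O(1)`. -/
theorem exists_seq_all_substrings_complex (c : ℝ) (hc : c < 1) :
    ∃ ω : ℕ → Bool, ∃ d : ℕ, ∀ i len : ℕ,
      c * (len : ℝ) - (d : ℝ) ≤ (K (Encodable.encode (substr ω i len)) : ℝ) := by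
  obtain ⟨d, hG⟩ := exists_d c hc
  obtain ⟨ω, hω⟩ := exists_omega c d hG
  refine ⟨ω, d, fun i len => ?_⟩
  have h := hω i len
  rw [Forb] at h
  push_neg at h
  have hlen : (substr ω i len).length = len := by simp [substr]
  rwa [hlen] at h
end

section
/- Let c be a real number and d ∈ ℕ. If for every L ∈ ℕ there exists a finite binary string s : List Bool with |s| ≥ L such that every contiguous substring x of s satisfies K(x) ≥ c·|x| − d, then there exists a bi-infinite binary sequence ω : ℤ → Bool such that every finite substring x of ω satisfies K(x) ≥ c·|x| − d. -/
/-- The substring of a bi-infinite sequence `ω : ℤ → Bool` of length `len`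
starting at position `i`. -/
def substrZ (ω : ℤ → Bool) (i : ℤ) (len : ℕ) : List Bool :=
  List.ofFn fun k : Fin len => ω (i + (k : ℤ))

/-- If there are arbitrarily long finite strings all of whose contiguous substrings `x`
satisfy `K(x) ≥ c·|x| − d`, then there is a bi-infinite sequence with the same property. -/
theorem compactness_biinfinite (c : ℝ) (d : ℕ)
    (h : ∀ L : ℕ, ∃ s : List Bool, L ≤ s.length ∧
      ∀ x : List Bool, x <:+: s →
        c * (x.length : ℝ) - (d : ℝ) ≤ (K (Encodable.encode x) : ℝ)) :
    ∃ ω : ℤ → Bool, ∀ (i : ℤ) (len : ℕ),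
      c * (len : ℝ) - (d : ℝ) ≤ (K (Encodable.encode (substrZ ω i len)) : ℝ) := by
  classical
  set S : ℕ → List Bool := fun n => (h (2*n+1)).choose with hS
  have hlen : ∀ n, 2*n+1 ≤ (S n).length := fun n => (h (2*n+1)).choose_spec.1
  have hbound : ∀ n x, x <:+: S n →
      c * (x.length : ℝ) - (d : ℝ) ≤ (K (Encodable.encode x) : ℝ) :=
    fun n => (h (2*n+1)).choose_spec.2
  set g : ℕ → ℤ → Bool := fun n i => (S n).getD ((n : ℤ) + i).toNat false with hg
  let U : Ultrafilter ℕ := Ultrafilter.of Filter.atTop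
  have hU : ↑U ≤ (Filter.atTop : Filter ℕ) := Ultrafilter.of_le _
  set ω : ℤ → Bool := fun i => if {n | g n i = true} ∈ U then true else false with hωdef
  have hω : ∀ i, {n | g n i = ω i} ∈ U := by
    intro i
    by_cases hc : {n | g n i = true} ∈ U
    · simp [hωdef, hc]
    · have h2 := (Ultrafilter.compl_mem_iff_notMem).2 hc
      simp only [hωdef, if_neg hc]
      convert h2 using 1
      ext n
      simp [Set.mem_compl_iff, Bool.not_eq_true]
  refine ⟨ω, fun i len => ?_⟩
  have hA : (⋂ k : Fin len, {n | g n (i + (k : ℤ)) = ω (i + (k : ℤ))}) ∈ U :=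
    Filter.iInter_mem.2 fun k => hω _
  have hB : {n : ℕ | i.natAbs + len ≤ n} ∈ U := hU (Filter.mem_atTop _)
  obtain ⟨n, hnB, hnA⟩ := Filter.nonempty_of_mem (Filter.inter_mem hB hA)
  simp only [Set.mem_setOf_eq] at hnB
  have habs : (i.natAbs : ℤ) + len ≤ n := by exact_mod_cast hnB
  have h1 : (0:ℤ) ≤ (n:ℤ) + i := by omega
  set a : ℕ := ((n:ℤ) + i).toNat with ha
  have ha' : (a : ℤ) = (n:ℤ) + i := Int.toNat_of_nonneg h1
  have hale : a + len ≤ (S n).length := by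
    have := hlen n
    omega
  have key : substrZ ω i len = ((S n).drop a).take len := by
    apply List.ext_getElem
    · simp [substrZ, List.length_take, List.length_drop]
      omega
    · intro m hm1 hm2
      have hmlen : m < len := by simpa [substrZ] using hm1
      have hωg : ω (i + (m:ℤ)) = g n (i + (m:ℤ)) := by
        have := hnA
        rw [Set.mem_iInter] at this
        exact (this ⟨m, hmlen⟩).symm
      have hidx : ((n:ℤ) + (i + (m:ℤ))).toNat = a + m := by omega
      have hlt : a + m < (S n).length := by omega
      simp only [substrZ, List.getElem_ofFn]
      rw [hωg]
      simp only [hg, hidx]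
      rw [List.getD_eq_getElem _ _ hlt]
      rw [List.getElem_take, List.getElem_drop]
  have hinfix : ((S n).drop a).take len <:+: S n :=
    (List.take_prefix _ _).isInfix.trans (List.drop_suffix _ _).isInfix
  have := hbound n _ hinfix
  rw [key]
  have hlen' : (((S n).drop a).take len).length = len := by
    simp [List.length_take, List.length_drop]; omega
  rwa [hlen'] at this
end

section
/- Let τ be a Wang tile set, w ≥ 1 a width, and cL, cR boundary colors. A stripe tiling of width w exists if and only if there exists a stripe tiling g of width w that is vertically periodic with some period h satisfying 1 ≤ h ≤ |τ|^w, i.e., g (i, j + h) = g (i, j) for all i ∈ Fin w and j ∈ ℤ. -/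
/-- `g` is a tiling of the bi-infinite vertical stripe of width `w` with boundary colors
`cL` on the left and `cR` on the right. -/
def WangTileSet.IsStripeTiling (W : WangTileSet) (w : ℕ) (cL cR : W.Color)
    (g : Fin w × ℤ → W.Tile) : Prop :=
  (∀ (i : Fin w) (j : ℤ) (h : (i : ℕ) + 1 < w),
      W.east (g (i, j)) = W.west (g (⟨(i : ℕ) + 1, h⟩, j))) ∧
  (∀ (i : Fin w) (j : ℤ), W.north (g (i, j)) = W.south (g (i, j + 1))) ∧
  (∀ (j : ℤ) (h0 : 0 < w), W.west (g (⟨0, h0⟩, j)) = cL) ∧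
  (∀ (j : ℤ) (h1 : w - 1 < w), W.east (g (⟨w - 1, h1⟩, j)) = cR)

/-- A stripe of width `w` can be tiled iff it can be tiled vertically periodically,
with a period at most `|τ|^w`. -/
theorem stripe_tiling_iff_periodic (W : WangTileSet) (w : ℕ) (hw : 1 ≤ w)
    (cL cR : W.Color) :
    (∃ g : Fin w × ℤ → W.Tile, W.IsStripeTiling w cL cR g) ↔
    (∃ g : Fin w × ℤ → W.Tile, W.IsStripeTiling w cL cR g ∧
      ∃ h : ℕ, 1 ≤ h ∧ h ≤ (Fintype.card W.Tile) ^ w ∧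
        ∀ (i : Fin w) (j : ℤ), g (i, j + (h : ℤ)) = g (i, j)) := by
  constructor
  · rintro ⟨g, hg⟩
    obtain ⟨hE, hNo, hL, hR⟩ := hg
    have hne : Nonempty W.Tile := ⟨g (⟨0, hw⟩, 0)⟩
    set N := Fintype.card W.Tile ^ w with hNdef
    -- pigeonhole on rows 0..N
    have hcard : Fintype.card (Fin w → W.Tile) < Fintype.card (Fin (N + 1)) := by
      simp [Fintype.card_fun, hNdef]
    obtain ⟨a, b, hab, hr⟩ :=
      Fintype.exists_ne_map_eq_of_card_lt
        (fun k : Fin (N + 1) => (fun i : Fin w => g (i, (k : ℤ)))) hcard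
    wlog hlt : (a : ℕ) < (b : ℕ) generalizing a b
    · exact this b a hab.symm hr.symm
        (lt_of_le_of_ne (not_lt.mp hlt) (fun e => hab (Fin.ext e.symm)))
    set j₁ : ℤ := (a : ℤ) with hj₁
    set h : ℕ := (b : ℕ) - (a : ℕ) with hh
    have hh0 : 0 < h := Nat.sub_pos_of_lt hlt
    have hhN : h ≤ N := le_trans (Nat.sub_le _ _) (Nat.lt_succ_iff.mp b.isLt)
    have hjb : j₁ + (h : ℤ) = (b : ℤ) := by
      simp [hj₁, hh, Int.ofNat_sub hlt.le]
    have hrow : ∀ i : Fin w, g (i, j₁ + (h : ℤ)) = g (i, j₁) := by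
      intro i
      rw [hjb]
      exact (congrFun hr i).symm
    have hhz : (0 : ℤ) < (h : ℤ) := by exact_mod_cast hh0
    refine ⟨fun p => g (p.1, j₁ + (p.2 - j₁) % (h : ℤ)), ⟨?_, ?_, ?_, ?_⟩, h, hh0, hhN, ?_⟩
    · intro i j hi; exact hE i _ hi
    · intro i j
      simp only
      have hmod := Int.emod_nonneg (j - j₁) (ne_of_gt hhz)
      have hlt2 := Int.emod_lt_of_pos (j - j₁) hhz
      set a0 := (j - j₁) % (h : ℤ) with ha0
      have h1 : (j + 1 - j₁) % (h : ℤ) = (a0 + 1) % (h : ℤ) := by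
        have he : j + 1 - j₁ = (j - j₁) + 1 := by ring
        rw [he, Int.add_emod, Int.add_emod a0 1, ha0, Int.emod_emod_of_dvd _ dvd_rfl]
      rw [h1]
      rcases lt_or_eq_of_le (by omega : a0 + 1 ≤ (h : ℤ)) with hc | hc
      · rw [Int.emod_eq_of_lt (by omega) hc, ← add_assoc]
        exact hNo i (j₁ + a0)
      · rw [hc, Int.emod_self, add_zero]
        have hstep := hNo i (j₁ + a0)
        rw [add_assoc, hc] at hstep
        rw [hstep, hrow i]
    · intro j h0; exact hL _ h0
    · intro j h1; exact hR _ h1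
    · intro i j
      simp only
      congr 2
      have : j + (h : ℤ) - j₁ = (j - j₁) + 1 * (h : ℤ) := by ring
      rw [this, Int.add_mul_emod_self_right]
  · rintro ⟨g, hg, _⟩; exact ⟨g, hg⟩
end

section
/- Let τ be a Wang tile set, b : τ → Bool a labeling of tiles by bits, and cL, cR boundary colors. Define L_τ ⊆ List Bool as the set of strings s such that there exists a stripe tiling g of width |s| (with boundary colors cL, cR) with b (g (i, j)) = s.get i for all i ∈ Fin |s| and all j ∈ ℤ. Then L_τ is a computable set: its characteristic function List Bool → Bool is computable. -/
/-!
A stripe tiling of width `|s|` is a bi-infinite sequence of rows: words of tiles carrying the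
labels `s`, matching horizontally and with the prescribed boundary colours, each row fitting
under the next one. There are only finitely many rows, so such a sequence exists iff the finite
"fits under" graph on rows has a walk with as many steps as there are rows: by pigeonhole such a
walk revisits a row, and repeating the cycle periodically gives a bi-infinite walk. Enumerating
the rows and the starting points of walks of a given length only uses list operations, which are
primitive recursive once tiles and colours are encoded through their finite enumerations.
-/

theorem exists_int_walk_of_cycle {α : Type*} {r : α → α → Prop} {f : ℕ → α} {p : ℕ}
    (hp : 0 < p) (hcycle : f p = f 0) (hwalk : ∀ n < p, r (f n) (f (n + 1))) :
    ∃ g : ℤ → α, ∀ z, (∃ n < p, g z = f n) ∧ r (g z) (g (z + 1)) := by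
  refine ⟨fun z => f (z % p).toNat, fun z => ?_⟩
  have hz : 0 ≤ z % p := Int.emod_nonneg _ (by omega)
  have hz' : z % p < p := Int.emod_lt_of_pos _ (by omega)
  refine ⟨⟨_, by omega, rfl⟩, ?_⟩
  have hsucc : ((z + 1) % p).toNat = ((z % p).toNat + 1) % p := by
    rw [← Int.emod_add_emod, Int.toNat_emod (by omega) (by omega)]
    congr 1
    omega
  have hwrap : f (((z % p).toNat + 1) % p) = f ((z % p).toNat + 1) := by
    rcases (show (z % p).toNat + 1 < p ∨ (z % p).toNat + 1 = p by omega) with h | h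
    · rw [Nat.mod_eq_of_lt h]
    · rw [h, Nat.mod_self, hcycle]
  show r (f (z % p).toNat) (f ((z + 1) % p).toNat)
  rw [hsucc, hwrap]
  exact hwalk _ (by omega)

namespace List

variable {α β : Type*}

def walkStarts (r : α → α → Prop) [DecidableRel r] (l : List α) (k : ℕ) : List α :=
  (fun S => l.filter fun a => ∃ b ∈ S, r a b)^[k] l

theorem mem_walkStarts {r : α → α → Prop} [DecidableRel r] {l : List α} {k : ℕ} {a : α} :
    a ∈ l.walkStarts r k ↔
      ∃ f : ℕ → α, f 0 = a ∧ (∀ i ≤ k, f i ∈ l) ∧ ∀ i < k, r (f i) (f (i + 1)) := by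
  induction k generalizing a with
  | zero =>
    refine ⟨fun ha => ⟨fun _ => a, rfl, fun _ _ => ha, by simp⟩, ?_⟩
    rintro ⟨f, rfl, hl, -⟩
    exact hl 0 le_rfl
  | succ k ih =>
    simp only [walkStarts, Function.iterate_succ_apply', mem_filter, decide_eq_true_eq] at ih ⊢
    simp only [ih]
    constructor
    · rintro ⟨ha, b, ⟨f, rfl, hl, hr⟩, hab⟩
      refine ⟨fun | 0 => a | i + 1 => f i, rfl, ?_, ?_⟩
      · rintro (_ | i) hi
        exacts [ha, hl i (by omega)]
      · rintro (_ | i) hi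
        exacts [hab, hr i (by omega)]
    · rintro ⟨f, rfl, hl, hr⟩
      exact ⟨hl 0 (by omega), f 1, ⟨fun i => f (i + 1), rfl, fun i _ => hl _ (by omega),
        fun i _ => hr _ (by omega)⟩, hr 0 (by omega)⟩

theorem exists_lt_apply_eq_of_mem {l : List α} {f : ℕ → α} (hf : ∀ i ≤ l.length, f i ∈ l) :
    ∃ i j, i < j ∧ j ≤ l.length ∧ f i = f j := by
  classical
  obtain ⟨i, hi, j, hj, hne, hij⟩ := Finset.exists_ne_map_eq_of_card_lt_of_maps_to
    (s := Finset.range (l.length + 1)) (t := l.toFinset) (f := f)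
    (by simpa using Nat.lt_succ_of_le (toFinset_card_le l))
    (fun i hi => mem_toFinset.2 (hf i (by simpa [Nat.lt_succ_iff] using hi)))
  rw [Finset.mem_range] at hi hj
  rcases Nat.lt_or_gt_of_ne hne with h | h
  exacts [⟨i, j, h, by omega, hij⟩, ⟨j, i, h, by omega, hij.symm⟩]

theorem exists_int_walk_iff_walkStarts_ne_nil {r : α → α → Prop} [DecidableRel r]
    (l : List α) :
    (∃ f : ℤ → α, ∀ z, f z ∈ l ∧ r (f z) (f (z + 1))) ↔ l.walkStarts r l.length ≠ [] := by
  constructor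
  · rintro ⟨f, hf⟩
    refine ne_nil_of_mem (mem_walkStarts.2 ⟨fun i => f i, rfl, fun i _ => (hf i).1, ?_⟩)
    intro i _
    exact_mod_cast (hf i).2
  · intro h
    obtain ⟨a, ha⟩ := exists_mem_of_ne_nil _ h
    obtain ⟨f, -, hl, hr⟩ := mem_walkStarts.1 ha
    obtain ⟨i, j, hlt, hj, hij⟩ := exists_lt_apply_eq_of_mem hl
    obtain ⟨g, hg⟩ := exists_int_walk_of_cycle (f := fun n => f (i + n)) (p := j - i)
      (by omega) (by simp [Nat.add_sub_cancel' hlt.le, hij])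
      (fun n _ => hr (i + n) (by omega))
    refine ⟨g, fun z => ⟨?_, (hg z).2⟩⟩
    obtain ⟨n, hn, hgz⟩ := (hg z).1
    rw [hgz]
    exact hl (i + n) (by omega)

noncomputable def mapPreimages [Fintype α] [DecidableEq β] (f : α → β) (s : List β) :
    List (List α) :=
  s.foldr (fun x L => (Finset.univ.toList.filter (f · = x)).flatMap fun a => L.map (a :: ·)) [[]]

theorem mem_mapPreimages [Fintype α] [DecidableEq β] {f : α → β} {s : List β}
    {ρ : List α} : ρ ∈ s.mapPreimages f ↔ ρ.map f = s := by
  induction s generalizing ρ with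
  | nil => simp [mapPreimages]
  | cons x s ih =>
    simp only [mapPreimages, foldr_cons, mem_flatMap, mem_filter, Finset.mem_toList,
      Finset.mem_univ, decide_eq_true_eq, true_and, mem_map, map_eq_cons_iff] at ih ⊢
    simp only [ih]
    aesop

theorem map_ofFn_eq_iff {s : List β} (f : α → β) (ρ : Fin s.length → α) :
    (ofFn ρ).map f = s ↔ ∀ i, f (ρ i) = s.get i := by
  simp [ext_get_iff, Fin.forall_iff]

theorem exists_ofFn_eq {n : ℕ} {l : List α} (h : l.length = n) : ∃ ρ : Fin n → α, ofFn ρ = l :=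
  ⟨fun i => l.get (Fin.cast h.symm i), by rw [← ofFn_congr h, ofFn_get]⟩

end List

namespace Primrec

variable {α β : Type*} [Primcodable α] [Primcodable β]

theorem list_mapPreimages [Fintype α] [DecidableEq β] (f : α → β) :
    Primrec fun s : List β => s.mapPreimages f := by
  have hfibre : Primrec₂ fun (_ : List β) (q : β × List (List α)) =>
      (Finset.univ.toList : List α).filter (f · = q.1) :=
    ((Primrec.eq.comp₂ ((dom_finite f).comp₂ Primrec₂.left) Primrec₂.right).listFilter.comp
      (const _) (fst.comp snd)).to₂
  have hextend : Primrec₂ fun (_ : List β) (q : β × List (List α)) =>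
      ((Finset.univ.toList : List α).filter (f · = q.1)).flatMap fun a => q.2.map (a :: ·) :=
    (list_flatMap hfibre (list_map (snd.comp (snd.comp fst))
      (list_cons.comp (snd.comp fst) snd).to₂).to₂).to₂
  exact list_foldr .id (const [[]]) hextend

theorem list_walkStarts {r : β → β → Prop} [DecidableRel r]
    (hr : PrimrecRel r) {l : α → List β} {k : α → ℕ} (hl : Primrec l) (hk : Primrec k) :
    Primrec fun a => (l a).walkStarts r (k a) := by
  have hstep : Primrec₂ fun a (S : List β) => (l a).filter fun b => ∃ c ∈ S, r b c :=
    ((PrimrecRel.exists_mem_list (R := fun c b => r b c) (hr.comp snd fst)).comp₂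
      (snd.comp₂ Primrec₂.right) Primrec₂.left |>.listFilter).comp (hl.comp fst) .id |>.to₂
  exact nat_iterate hk hl hstep

end Primrec

namespace WangTileSet

variable (W : WangTileSet)

/-- This one equation between colour words encodes both the matching of adjacent tiles and the
two boundary colours. The empty row is exempt, as a stripe of width `0` imposes nothing. -/
def IsRow (cL cR : W.Color) (ρ : List W.Tile) : Prop :=
  ρ = [] ∨ cL :: ρ.map W.east = ρ.map W.west ++ [cR]

def FitsUnder (ρ ρ' : List W.Tile) : Prop :=
  ρ.map W.north = ρ'.map W.south

variable {W}

theorem isRow_ofFn {cL cR : W.Color} {n : ℕ} (ρ : Fin n → W.Tile) :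
    W.IsRow cL cR (List.ofFn ρ) ↔
      (∀ (i : Fin n) (h : (i : ℕ) + 1 < n), W.east (ρ i) = W.west (ρ ⟨i + 1, h⟩)) ∧
      (∀ h0 : 0 < n, W.west (ρ ⟨0, h0⟩) = cL) ∧
      (∀ h1 : n - 1 < n, W.east (ρ ⟨n - 1, h1⟩) = cR) := by
  rcases n with _ | n
  · simp [IsRow]
  rw [IsRow, or_iff_right (by simp), List.ext_getElem_iff]
  constructor
  · rintro ⟨-, h⟩
    refine ⟨fun i hi => ?_, fun h0 => ?_, fun h1 => ?_⟩
    · have hi' : (i : ℕ) < n := by omega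
      simpa [List.getElem_append, hi', -List.ofFn_succ] using
        h (i + 1) (by simpa using hi'.le) (by simpa using hi'.le)
    · simpa [List.getElem_append, -List.ofFn_succ] using (h 0 (by simp) (by simp)).symm
    · simpa [List.getElem_append, -List.ofFn_succ] using h (n + 1) (by simp) (by simp)
  · rintro ⟨hmid, hleft, hright⟩
    refine ⟨by simp, fun m h1 h2 => ?_⟩
    rcases m with _ | m
    · simpa [-List.ofFn_succ] using (hleft (by omega)).symm
    simp only [List.getElem_cons_succ, List.getElem_append, List.getElem_map, List.getElem_ofFn]
    rw [List.length_cons, List.length_map, List.length_ofFn] at h1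
    split_ifs with hm
    · rw [List.length_map, List.length_ofFn] at hm
      exact hmid ⟨m, by omega⟩ hm
    · have hm : m = n := by
        rw [List.length_map, List.length_ofFn] at hm
        omega
      subst hm
      simpa using hright (by omega)

theorem fitsUnder_ofFn {n : ℕ} (ρ ρ' : Fin n → W.Tile) :
    W.FitsUnder (List.ofFn ρ) (List.ofFn ρ') ↔ ∀ i, W.north (ρ i) = W.south (ρ' i) := by
  simp [FitsUnder, List.map_ofFn, List.ofFn_inj, funext_iff]

variable (W) {β : Type*} [DecidableEq β]

open Classical in
noncomputable def rows (b : W.Tile → β) (cL cR : W.Color) (s : List β) : List (List W.Tile) :=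
  (s.mapPreimages b).filter (W.IsRow cL cR ·)

variable {W}

theorem mem_rows {b : W.Tile → β} {cL cR : W.Color} {s : List β} {ρ : List W.Tile} :
    ρ ∈ W.rows b cL cR s ↔ ρ.map b = s ∧ W.IsRow cL cR ρ := by
  simp [rows, List.mem_mapPreimages]

theorem exists_stripeTiling_iff (b : W.Tile → β) (cL cR : W.Color) (s : List β) :
    (∃ g : Fin s.length × ℤ → W.Tile, W.IsStripeTiling s.length cL cR g ∧
      ∀ (i : Fin s.length) (j : ℤ), b (g (i, j)) = s.get i) ↔
    ∃ f : ℤ → List W.Tile, ∀ j, f j ∈ W.rows b cL cR s ∧ W.FitsUnder (f j) (f (j + 1)) := by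
  constructor
  · rintro ⟨g, ⟨hhoriz, hvert, hleft, hright⟩, hb⟩
    refine ⟨fun j => List.ofFn fun i => g (i, j), fun j => ⟨mem_rows.2 ⟨?_, ?_⟩, ?_⟩⟩
    · exact (List.map_ofFn_eq_iff _ _).2 fun i => hb i j
    · exact (isRow_ofFn _).2 ⟨fun i => hhoriz i j, hleft j, hright j⟩
    · exact (fitsUnder_ofFn _ _).2 fun i => hvert i j
  · rintro ⟨f, hf⟩
    have hrow (j : ℤ) : ∃ ρ : Fin s.length → W.Tile, List.ofFn ρ = f j :=
      List.exists_ofFn_eq (by rw [← (mem_rows.1 (hf j).1).1, List.length_map])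
    choose ρ hρ using hrow
    have hρ_rows (j : ℤ) := hf j
    simp only [← hρ, mem_rows, List.map_ofFn_eq_iff, isRow_ofFn, fitsUnder_ofFn] at hρ_rows
    exact ⟨fun p => ρ p.2 p.1, ⟨fun i j => (hρ_rows j).1.2.1 i, fun i j => (hρ_rows j).2 i,
      fun j => (hρ_rows j).1.2.2.1, fun j => (hρ_rows j).1.2.2.2⟩, fun i j => (hρ_rows j).1.1 i⟩

open Primrec in
theorem primrecRel_fitsUnder [Primcodable W.Tile] [Primcodable W.Color] :
    PrimrecRel W.FitsUnder :=
  Primrec.eq.comp₂ (list_map fst ((dom_finite W.north).comp snd).to₂)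
    (list_map snd ((dom_finite W.south).comp snd).to₂)

open Primrec Classical in
theorem primrec_rows [Primcodable W.Tile] [Primcodable W.Color] [Primcodable β]
    (b : W.Tile → β) (cL cR : W.Color) : Primrec (W.rows b cL cR) := by
  have hcolours (c : W.Tile → W.Color) : Primrec fun ρ : List W.Tile => ρ.map c :=
    list_map .id ((dom_finite c).comp snd).to₂
  have hrow : PrimrecPred (W.IsRow cL cR) :=
    (Primrec.eq.comp .id (const [])).or <|
      Primrec.eq.comp (list_cons.comp (const cL) (hcolours W.east))
        (list_append.comp (hcolours W.west) (const [cR]))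
  exact (listFilter hrow).comp (list_mapPreimages b)

end WangTileSet

/-- The language of bit strings realizable on width-`|s|` stripe tilings is computable. -/
theorem stripe_language_computable (W : WangTileSet) (b : W.Tile → Bool)
    (cL cR : W.Color) :
    ∃ χ : List Bool → Bool, Computable χ ∧
      ∀ s : List Bool, χ s = true ↔
        ∃ g : Fin s.length × ℤ → W.Tile, W.IsStripeTiling s.length cL cR g ∧
          ∀ (i : Fin s.length) (j : ℤ), b (g (i, j)) = s.get i := by
  classical
  let _ : Primcodable W.Tile := .ofEquiv _ (Fintype.equivFin _)
  let _ : Primcodable W.Color := .ofEquiv _ (Fintype.equivFin _)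
  refine ⟨fun s => decide
    ((W.rows b cL cR s).walkStarts W.FitsUnder (W.rows b cL cR s).length ≠ []), ?_, fun s => ?_⟩
  · have hrows := W.primrec_rows b cL cR
    exact (Primrec.eq.comp (Primrec.list_walkStarts WangTileSet.primrecRel_fitsUnder hrows
      (Primrec.list_length.comp hrows)) (Primrec.const [])).not.decide.to_comp
  · rw [decide_eq_true_iff, W.exists_stripeTiling_iff, List.exists_int_walk_iff_walkStarts_ne_nil]
end

section
/- Let τ be a Wang tile set and c ∈ ℕ. If for every L ∈ ℕ there exist N ≥ L and a tiling g : Fin N × Fin N → τ of the N × N square (satisfying the Wang matching rules) such that every m × m sub-block of g has Kolmogorov complexity at most c·m, then there exists a tiling f of the whole plane by τ such that for every m ≥ 1 and every (i,j) ∈ ℤ², the m × m block of f at (i,j) has Kolmogorov complexity at most c·m. -/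
/-- `g` is a tiling of the `N × N` square satisfying the Wang matching rules wherever
both cells exist. -/
def WangTileSet.IsSquareTiling (W : WangTileSet) (N : ℕ)
    (g : Fin N × Fin N → W.Tile) : Prop :=
  (∀ (i j : Fin N) (h : (i : ℕ) + 1 < N),
      W.east (g (i, j)) = W.west (g (⟨(i : ℕ) + 1, h⟩, j))) ∧
  (∀ (i j : Fin N) (h : (j : ℕ) + 1 < N),
      W.north (g (i, j)) = W.south (g (i, ⟨(j : ℕ) + 1, h⟩)))

/-- The `m × m` sub-block of `g : Fin N × Fin N → W.Tile` at position `(i₀, j₀)`. -/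
def WangTileSet.subBlock (W : WangTileSet) {N : ℕ} (g : Fin N × Fin N → W.Tile)
    (m i₀ j₀ : ℕ) (hi : i₀ + m ≤ N) (hj : j₀ + m ≤ N) : Fin m × Fin m → W.Tile :=
  fun p => g (⟨i₀ + (p.1 : ℕ), Nat.lt_of_lt_of_le (Nat.add_lt_add_left p.1.isLt i₀) hi⟩,
              ⟨j₀ + (p.2 : ℕ), Nat.lt_of_lt_of_le (Nat.add_lt_add_left p.2.isLt j₀) hj⟩)

/-- The pattern `x` occurs as a sub-block of `g`. -/
def WangTileSet.OccursIn (W : WangTileSet) {n N : ℕ} (x : Fin n × Fin n → W.Tile)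
    (g : Fin N × Fin N → W.Tile) : Prop :=
  ∃ (i₀ j₀ : ℕ) (hi : i₀ + n ≤ N) (hj : j₀ + n ≤ N),
    W.subBlock g n i₀ j₀ hi hj = x

set_option maxHeartbeats 400000 in
/-- Compactness: if there are arbitrarily large square tilings all of whose `m × m`
sub-blocks have complexity at most `c·m`, then there is a tiling of the whole plane
all of whose `m × m` blocks have complexity at most `c·m`. -/
theorem compactness_linear_complexity (W : WangTileSet) (c : ℕ)
    (h : ∀ L : ℕ, ∃ N : ℕ, L ≤ N ∧ ∃ g : Fin N × Fin N → W.Tile,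
      W.IsSquareTiling N g ∧
      ∀ (m i₀ j₀ : ℕ) (hi : i₀ + m ≤ N) (hj : j₀ + m ≤ N),
        K (Encodable.encode (W.subBlock g m i₀ j₀ hi hj)) ≤ c * m) :
    ∃ f : ℤ × ℤ → W.Tile, W.IsTiling f ∧
      ∀ m : ℕ, 1 ≤ m → ∀ i j : ℤ,
        K (Encodable.encode (W.block f m i j)) ≤ c * m := by
  classical
  letI : TopologicalSpace W.Tile := ⊥
  haveI : DiscreteTopology W.Tile := ⟨rfl⟩
  -- the family of closed constraint sets
  let Z : (ℤ × ℤ) ⊕ (ℕ × ℤ × ℤ) → Set (ℤ × ℤ → W.Tile) := fun idx =>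
    match idx with
    | .inl (i, j) => {f | W.east (f (i, j)) = W.west (f (i + 1, j)) ∧
        W.north (f (i, j)) = W.south (f (i, j + 1))}
    | .inr (m, i, j) => {f | K (Encodable.encode (W.block f m i j)) ≤ c * m}
  have hclosed : ∀ idx, IsClosed (Z idx) := by
    rintro (⟨i, j⟩ | ⟨m, i, j⟩)
    · have hcont : Continuous (fun f : ℤ × ℤ → W.Tile =>
        (f (i, j), f (i + 1, j), f (i, j + 1))) := by continuity
      exact IsClosed.preimage hcont (isClosed_discrete
        {p : W.Tile × W.Tile × W.Tile |
          W.east p.1 = W.west p.2.1 ∧ W.north p.1 = W.south p.2.2})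
    · have hcont : Continuous (fun f : ℤ × ℤ → W.Tile => W.block f m i j) := by
        apply continuous_pi
        intro p
        exact continuous_apply _
      exact IsClosed.preimage hcont (isClosed_discrete
        {x : Fin m × Fin m → W.Tile | K (Encodable.encode x) ≤ c * m})
  -- finite intersection property
  have hfin : ∀ t : Finset ((ℤ × ℤ) ⊕ (ℕ × ℤ × ℤ)),
      (Set.univ ∩ ⋂ idx ∈ t, Z idx).Nonempty := by
    intro t
    -- a bound so that all constraints in `t` fit in the window `[-B, B]²`
    let bound : (ℤ × ℤ) ⊕ (ℕ × ℤ × ℤ) → ℕ := fun idx =>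
      match idx with
      | .inl (i, j) => i.natAbs + j.natAbs + 2
      | .inr (m, i, j) => i.natAbs + j.natAbs + m + 2
    let B : ℕ := t.sup bound
    obtain ⟨N, hNB, g, hg, hK⟩ := h (2 * B + 1)
    have hN0 : 0 < N := by omega
    -- the translated function
    let idx1 : ℤ → Fin N := fun z => ⟨min (z + B).toNat (N - 1), by omega⟩
    let f : ℤ × ℤ → W.Tile := fun p => g (idx1 p.1, idx1 p.2)
    refine ⟨f, Set.mem_univ _, ?_⟩
    simp only [Set.mem_iInter]
    intro idx hidx
    have hbB : bound idx ≤ B := Finset.le_sup hidx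
    match idx with
    | .inl (i, j) =>
        have hb : i.natAbs + j.natAbs + 2 ≤ B := hbB
        have hu : ((idx1 i : Fin N) : ℕ) + 1 < N := by
          show min (i + (B : ℤ)).toNat (N - 1) + 1 < N; omega
        have hv : ((idx1 j : Fin N) : ℕ) + 1 < N := by
          show min (j + (B : ℤ)).toNat (N - 1) + 1 < N; omega
        have hiv1 : (⟨(idx1 i : Fin N) + 1, hu⟩ : Fin N) = idx1 (i + 1) := by
          apply Fin.ext
          show min (i + (B : ℤ)).toNat (N - 1) + 1 = min (i + 1 + (B : ℤ)).toNat (N - 1)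
          omega
        have hjv1 : (⟨(idx1 j : Fin N) + 1, hv⟩ : Fin N) = idx1 (j + 1) := by
          apply Fin.ext
          show min (j + (B : ℤ)).toNat (N - 1) + 1 = min (j + 1 + (B : ℤ)).toNat (N - 1)
          omega
        constructor
        · show W.east (g (idx1 i, idx1 j)) = W.west (g (idx1 (i + 1), idx1 j))
          exact (hg.1 (idx1 i) (idx1 j) hu).trans
            (congrArg (fun u => W.west (g (u, idx1 j))) hiv1)
        · show W.north (g (idx1 i, idx1 j)) = W.south (g (idx1 i, idx1 (j + 1)))
          exact (hg.2 (idx1 i) (idx1 j) hv).trans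
            (congrArg (fun v => W.south (g (idx1 i, v))) hjv1)
    | .inr (m, i, j) =>
        have hb : i.natAbs + j.natAbs + m + 2 ≤ B := hbB
        have hi : (i + B).toNat + m ≤ N := by omega
        have hj : (j + B).toNat + m ≤ N := by omega
        have hblock : W.block f m i j =
            W.subBlock g m (i + B).toNat (j + B).toNat hi hj := by
          funext p
          show g (idx1 (i + (p.1 : ℤ)), idx1 (j + (p.2 : ℤ))) = _
          have h1 : idx1 (i + (p.1 : ℤ)) =
              ⟨(i + B).toNat + (p.1 : ℕ),
                Nat.lt_of_lt_of_le (Nat.add_lt_add_left p.1.isLt _) hi⟩ := by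
            simp only [idx1]
            have hp1 : (p.1 : ℕ) < m := p.1.isLt
            congr 1
            omega
          have h2 : idx1 (j + (p.2 : ℤ)) =
              ⟨(j + B).toNat + (p.2 : ℕ),
                Nat.lt_of_lt_of_le (Nat.add_lt_add_left p.2.isLt _) hj⟩ := by
            simp only [idx1]
            have hp2 : (p.2 : ℕ) < m := p.2.isLt
            congr 1
            omega
          rw [h1, h2]
          rfl
        show K (Encodable.encode (W.block f m i j)) ≤ c * m
        rw [hblock]
        exact hK m _ _ hi hj
  obtain ⟨f, -, hf⟩ := IsCompact.inter_iInter_nonempty isCompact_univ Z hclosed hfin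
  rw [Set.mem_iInter] at hf
  refine ⟨f, fun i j => hf (.inl (i, j)), fun m _ i j => hf (.inr (m, i, j))⟩
end
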